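/- Let U = ℂ \ {μ ∈ ℂ : μ² ∈ [1/4, ∞)}. For all μ ∈ U, the function z₋(μ) = (1 - √(1-4μ²))/(2μ) (with z₋(0) = 0) satisfies |z₋(μ)| < 1. -/

import Mathlib

open Complex

/-!
Write `s = √(1 - 4μ²)`. Off the cuts, `1 - 4μ²` lies in the slit plane, so its principal square
root has `0 < Re s`, i.e. `s` is closer to `1` than to `-1`. Since `(1 - s)(1 + s) = 4μ²`, this
gives `|1 - s|² < |1 - s| |1 + s| = |2μ|²`, which is `|z₋(μ)| < 1`.
-/

/-- The branch `z₋(μ) = (1 - √(1-4μ²))/(2μ)`, with the principal square root,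
extended by `z₋(0) = 0`. -/
noncomputable def zminus (μ : ℂ) : ℂ :=
  if μ = 0 then 0 else (1 - (1 - 4 * μ ^ 2) ^ ((1 : ℂ) / 2)) / (2 * μ)

namespace Complex

open ComplexOrder in
lemma one_sub_four_mul_sq_mem_slitPlane {μ : ℂ} (hμ : ¬∃ t : ℝ, 1 / 4 ≤ t ∧ μ ^ 2 = t) :
    1 - 4 * μ ^ 2 ∈ slitPlane := by
  refine mem_slitPlane_iff_not_le_zero.2 fun h ↦ hμ ⟨(μ ^ 2).re, ?_, ?_⟩
  all_goals
    obtain ⟨hre, him⟩ := nonpos_iff.1 h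
    simp only [sub_re, sub_im, one_re, one_im, mul_re, mul_im, re_ofNat, im_ofNat] at hre him
  · linarith
  · apply Complex.ext <;> simp; linarith

lemma re_cpow_inv_two_pos {w : ℂ} (hw : w ∈ slitPlane) : 0 < (w ^ (2⁻¹ : ℂ)).re := by
  rw [cpow_inv_two_re, Real.sqrt_pos]
  rcases mem_slitPlane_iff.1 hw with hre | him
  · linarith [norm_nonneg w]
  · linarith [abs_re_lt_norm.2 him, neg_abs_le w.re]

lemma norm_one_sub_lt_norm_one_add {s : ℂ} (hs : 0 < s.re) : ‖1 - s‖ < ‖1 + s‖ := by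
  rw [← sq_lt_sq₀ (norm_nonneg _) (norm_nonneg _), Complex.sq_norm, Complex.sq_norm,
    normSq_apply, normSq_apply]
  simp only [sub_re, sub_im, add_re, add_im, one_re, one_im]
  nlinarith

lemma norm_one_sub_sq_lt_norm_one_sub_sq {s : ℂ} (hs : 0 < s.re) (hs1 : s ≠ 1) :
    ‖1 - s‖ ^ 2 < ‖1 - s ^ 2‖ := by
  have hpos : 0 < ‖1 - s‖ := norm_pos_iff.2 (sub_ne_zero.2 hs1.symm)
  calc ‖1 - s‖ ^ 2 = ‖1 - s‖ * ‖1 - s‖ := sq _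
    _ < ‖1 - s‖ * ‖1 + s‖ := mul_lt_mul_of_pos_left (norm_one_sub_lt_norm_one_add hs) hpos
    _ = ‖1 - s ^ 2‖ := by rw [← norm_mul]; ring_nf

end Complex

theorem stmt_7 (U : Set ℂ) (hU : U = {μ : ℂ | ¬ ∃ t : ℝ, (1/4 : ℝ) ≤ t ∧ μ ^ 2 = (t : ℂ)}) :
    ∀ μ ∈ U, ‖zminus μ‖ < 1 := by
  subst hU
  intro μ hμ
  by_cases hμ0 : μ = 0
  · simp [zminus, hμ0]
  set s := (1 - 4 * μ ^ 2) ^ (2⁻¹ : ℂ)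
  have hs : s ^ 2 = 1 - 4 * μ ^ 2 := cpow_ofNat_inv_pow _ 2
  have hs1 : s ≠ 1 := by
    intro h
    rw [h] at hs
    exact hμ0 (by simpa using hs.symm)
  have hre : 0 < s.re := re_cpow_inv_two_pos (one_sub_four_mul_sq_mem_slitPlane hμ)
  have hz : zminus μ = (1 - s) / (2 * μ) := by rw [zminus, if_neg hμ0, one_div]
  rw [← sq_lt_one_iff₀ (norm_nonneg _), hz, norm_div, div_pow,
    div_lt_one (pow_pos (norm_pos_iff.2 (mul_ne_zero two_ne_zero hμ0)) 2)]
  calc ‖1 - s‖ ^ 2 < ‖1 - s ^ 2‖ := norm_one_sub_sq_lt_norm_one_sub_sq hre hs1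
    _ = ‖2 * μ‖ ^ 2 := by rw [hs, ← norm_pow]; ring_nf
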